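/- Let d ≥ 1 and let J : ℝ^d → (0,∞) be a Borel function with J ∈ L^1(ℝ^d). For ε > 0 set J_ε(x) = ε^d J(εx). Then for every Borel set E ⊂ ℝ^d of finite Lebesgue measure, lim_{ε→0⁺} Per_{J_ε}(E) = ‖J‖_{L^1} |E|. -/

import Mathlib

open MeasureTheory Filter Topology ENNReal

/-- The `J`-perimeter `Per_J(E) = ∫_E ∫_{Eᶜ} J(x − y) dy dx`. -/
noncomputable def JPer {d : ℕ} (J : EuclideanSpace ℝ (Fin d) → ℝ)
    (E : Set (EuclideanSpace ℝ (Fin d))) : ℝ≥0∞ :=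
  ∫⁻ x in E, ∫⁻ y in Eᶜ, ENNReal.ofReal (J (x - y))

/-!
Substituting `y = x - ε⁻¹ • z` and swapping the integrals gives
`Per_{J_ε}(E) = ∫ J(z) |E \ (ε⁻¹ • z + E)| dz`. For `z ≠ 0` the translate `ε⁻¹ • z + E` escapes
to infinity as `ε → 0⁺`, so its overlap with `E` vanishes and `|E \ (ε⁻¹ • z + E)| → |E|`.
The integrand is dominated by `J(z) |E|`, and dominated convergence gives `‖J‖₁ |E|`.
-/

open Bornology Metric Pointwise Set Module

theorem mem_vadd_set_iff_sub_mem {G : Type*} [AddCommGroup G] {s : Set G} {w x : G} :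
    x ∈ w +ᵥ s ↔ x - w ∈ s := by
  rw [mem_vadd_set_iff_neg_vadd_mem, vadd_eq_add, neg_add_eq_sub]

section Translation

variable {G : Type*} [SeminormedAddCommGroup G] {s : Set G}

theorem inter_vadd_subset_of_two_mul_lt_norm {R : ℝ} {v : G} (hv : 2 * R < ‖v‖) :
    s ∩ (v +ᵥ s) ⊆ (s \ closedBall 0 R) ∪ (v +ᵥ (s \ closedBall 0 R)) := by
  rintro _ ⟨hxs, y, hys, rfl⟩
  by_cases hx : v +ᵥ y ∈ closedBall 0 R
  · refine Or.inr ⟨y, ⟨hys, fun hy => ?_⟩, rfl⟩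
    simp only [mem_closedBall_zero_iff, vadd_eq_add] at hx hy
    have := norm_sub_le (v + y) y
    rw [add_sub_cancel_right] at this
    linarith
  · exact Or.inl ⟨hxs, hx⟩

variable [MeasurableSpace G] [OpensMeasurableSpace G] {μ : Measure G}

theorem tendsto_measure_sdiff_closedBall_atTop (hs : MeasurableSet s) (hμs : μ s ≠ ∞) :
    Tendsto (fun n : ℕ => μ (s \ closedBall 0 n)) atTop (𝓝 0) := by
  have h := tendsto_measure_iInter_atTop (μ := μ) (s := fun n : ℕ => s \ closedBall (0 : G) n)
    (fun n => (hs.diff measurableSet_closedBall).nullMeasurableSet)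
    (fun m n hmn => sdiff_subset_sdiff subset_rfl (closedBall_subset_closedBall (by gcongr)))
    ⟨0, ((measure_mono sdiff_subset).trans_lt hμs.lt_top).ne⟩
  have h_empty : ⋂ n : ℕ, s \ closedBall (0 : G) n = ∅ := by
    simp_rw [sdiff_eq, ← inter_iInter, iInter_eq_compl_iUnion_compl, compl_compl,
      iUnion_closedBall_nat, compl_univ, inter_empty]
  rwa [h_empty, measure_empty] at h

variable [μ.IsAddLeftInvariant]

theorem tendsto_measure_inter_vadd_cobounded (hs : MeasurableSet s) (hμs : μ s ≠ ∞) :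
    Tendsto (fun v : G => μ (s ∩ (v +ᵥ s))) (cobounded G) (𝓝 0) := by
  rw [ENNReal.tendsto_nhds_zero]
  intro δ hδ
  obtain ⟨n, hn⟩ := ((tendsto_measure_sdiff_closedBall_atTop hs hμs).eventually_lt_const
    (ENNReal.half_pos hδ.ne')).exists
  filter_upwards [tendsto_norm_cobounded_atTop.eventually_gt_atTop (2 * n : ℝ)] with v hv
  calc μ (s ∩ (v +ᵥ s)) ≤ μ (s \ closedBall 0 n) + μ (v +ᵥ (s \ closedBall 0 n)) :=
        (measure_mono (inter_vadd_subset_of_two_mul_lt_norm hv)).trans (measure_union_le _ _)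
    _ ≤ δ / 2 + δ / 2 := by rw [measure_vadd]; exact add_le_add hn.le hn.le
    _ = δ := ENNReal.add_halves δ

theorem tendsto_measure_sdiff_vadd_cobounded [MeasurableAdd G] (hs : MeasurableSet s)
    (hμs : μ s ≠ ∞) :
    Tendsto (fun v : G => μ (s \ (v +ᵥ s))) (cobounded G) (𝓝 (μ s)) := by
  have h := ENNReal.Tendsto.sub tendsto_const_nhds
    (tendsto_measure_inter_vadd_cobounded hs hμs) (Or.inl hμs)
  rw [tsub_zero] at h
  refine h.congr fun v => ?_
  exact (ENNReal.eq_sub_of_add_eq ((measure_mono inter_subset_left).trans_lt hμs.lt_top).ne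
    (measure_sdiff_add_inter s (hs.const_vadd v))).symm

end Translation

section Kernel

variable {G : Type*} [AddCommGroup G] [MeasurableSpace G] [MeasurableAdd₂ G] [MeasurableNeg G]
  {μ : Measure G} [SFinite μ] {s : Set G}

theorem measurable_measure_sdiff_vadd (hs : MeasurableSet s) :
    Measurable fun w : G => μ (s \ (w +ᵥ s)) := by
  have hS : MeasurableSet {p : G × G | p.2 ∈ s ∧ p.2 - p.1 ∉ s} :=
    (measurable_snd hs).inter (measurable_snd.sub measurable_fst hs).compl
  convert measurable_measure_prodMk_left (ν := μ) hS using 3 with w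
  ext x
  simp [mem_vadd_set_iff_sub_mem]

variable [μ.IsAddLeftInvariant] [μ.IsNegInvariant]

theorem setLIntegral_setLIntegral_compl_sub (K : G → ℝ≥0∞) (hK : Measurable K)
    (hs : MeasurableSet s) :
    ∫⁻ x in s, ∫⁻ y in sᶜ, K (x - y) ∂μ ∂μ = ∫⁻ w, K w * μ (s \ (w +ᵥ s)) ∂μ := by
  have h_ind : Measurable (sᶜ.indicator (1 : G → ℝ≥0∞)) := measurable_one.indicator hs.compl
  have h_inner : ∀ x, ∫⁻ y in sᶜ, K (x - y) ∂μ = ∫⁻ w, K w * sᶜ.indicator 1 (x - w) ∂μ := by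
    intro x
    rw [← lintegral_indicator hs.compl, ← lintegral_sub_left_eq_self _ x]
    congr with w
    by_cases hw : x - w ∈ sᶜ <;> simp [hw]
  simp_rw [h_inner]
  rw [lintegral_lintegral_swap ((hK.comp measurable_snd).mul
    (h_ind.comp (measurable_fst.sub measurable_snd))).aemeasurable]
  congr with w
  have h_vadd : ∀ x, sᶜ.indicator (1 : G → ℝ≥0∞) (x - w) = (w +ᵥ s)ᶜ.indicator 1 x := by
    intro x
    by_cases hx : x - w ∈ s <;> simp [hx, mem_vadd_set_iff_sub_mem]
  simp_rw [h_vadd]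
  rw [lintegral_const_mul _ (measurable_one.indicator (hs.const_vadd w).compl),
    lintegral_indicator_one (hs.const_vadd w).compl, Measure.restrict_apply
    (hs.const_vadd w).compl, inter_comm, sdiff_eq]

end Kernel

section Scaling

variable {E : Type*} [NormedAddCommGroup E] [NormedSpace ℝ E] [MeasurableSpace E] [BorelSpace E]
  [FiniteDimensional ℝ E] (μ : Measure E) [μ.IsAddHaarMeasure]

theorem lintegral_comp_smul_of_ne_zero (f : E → ℝ≥0∞) {r : ℝ} (hr : r ≠ 0) :
    ∫⁻ x, f (r • x) ∂μ = ENNReal.ofReal |(r ^ finrank ℝ E)⁻¹| * ∫⁻ x, f x ∂μ := by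
  rw [← smul_eq_mul, ← lintegral_smul_measure, ← Measure.map_addHaar_smul μ hr]
  exact (lintegral_map_equiv f (Homeomorph.smulOfNeZero r hr).toMeasurableEquiv).symm

theorem lintegral_ofReal_rescale_mul (J : E → ℝ) (g : E → ℝ≥0∞) {r : ℝ} (hr : 0 < r) :
    ∫⁻ x, ENNReal.ofReal (r ^ finrank ℝ E * J (r • x)) * g x ∂μ
      = ∫⁻ z, ENNReal.ofReal (J z) * g (r⁻¹ • z) ∂μ := by
  have hrd : 0 < r ^ finrank ℝ E := pow_pos hr _
  have h := lintegral_comp_smul_of_ne_zero μ (fun z => ENNReal.ofReal (J z) * g (r⁻¹ • z)) hr.ne'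
  simp only [inv_smul_smul₀ hr.ne', abs_of_pos (inv_pos.2 hrd)] at h
  calc ∫⁻ x, ENNReal.ofReal (r ^ finrank ℝ E * J (r • x)) * g x ∂μ
      = ENNReal.ofReal (r ^ finrank ℝ E) * ∫⁻ x, ENNReal.ofReal (J (r • x)) * g x ∂μ := by
        rw [← lintegral_const_mul' _ _ ofReal_ne_top]
        simp only [ENNReal.ofReal_mul hrd.le, mul_assoc]
    _ = ∫⁻ z, ENNReal.ofReal (J z) * g (r⁻¹ • z) ∂μ := by
        rw [h, ← mul_assoc, ← ENNReal.ofReal_mul hrd.le, mul_inv_cancel₀ hrd.ne',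
          ENNReal.ofReal_one, one_mul]

end Scaling

theorem tendsto_inv_smul_cobounded {𝕜 E : Type*} [NormedField 𝕜] [NormedAddCommGroup E]
    [NormedSpace 𝕜 E] {z : E} (hz : z ≠ 0) :
    Tendsto (fun c : 𝕜 => c⁻¹ • z) (𝓝[≠] 0) (cobounded E) := by
  rw [← tendsto_norm_atTop_iff_cobounded]
  simp_rw [norm_smul]
  exact (tendsto_norm_cobounded_atTop.comp tendsto_inv₀_nhdsNE_zero).atTop_mul_const
    (norm_pos_iff.2 hz)

theorem tendsto_lintegral_mul_comp_inv_smul {E : Type*} [NormedAddCommGroup E] [NormedSpace ℝ E]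
    [MeasurableSpace E] [BorelSpace E] {μ : Measure E} [NullSingletonClass μ] {f g : E → ℝ≥0∞}
    (hf : Measurable f) (hf_fin : ∫⁻ z, f z ∂μ ≠ ∞) (hg : Measurable g) {C L : ℝ≥0∞}
    (hgC : ∀ v, g v ≤ C) (hC : C ≠ ∞) (hgL : Tendsto g (cobounded E) (𝓝 L)) :
    Tendsto (fun ε : ℝ => ∫⁻ z, f z * g (ε⁻¹ • z) ∂μ) (𝓝[>] 0) (𝓝 (∫⁻ z, f z * L ∂μ)) := by
  refine tendsto_lintegral_filter_of_dominated_convergence (fun z => f z * C)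
    (.of_forall fun ε => hf.mul (hg.comp (measurable_const_smul ε⁻¹)))
    (.of_forall fun ε => .of_forall fun z => mul_le_mul_right (hgC _) _)
    (by rw [lintegral_mul_const _ hf]; exact mul_ne_top hf_fin hC) ?_
  filter_upwards [Measure.ae_ne μ 0, ae_lt_top hf hf_fin] with z hz hfz
  exact ENNReal.Tendsto.const_mul (hgL.comp ((tendsto_inv_smul_cobounded hz).mono_left
    (nhdsWithin_mono _ fun ε hε => ne_of_gt hε))) (Or.inr hfz.ne)

/-- For an integrable positive kernel `J` and its rescalings `J_ε(x) = ε^d J(εx)`,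
`Per_{J_ε}(E) → ‖J‖_{L¹} |E|` as `ε ↓ 0`, for every Borel set `E` of finite Lebesgue
measure. -/
theorem statement16 {d : ℕ} (hd : 1 ≤ d)
    (J : EuclideanSpace ℝ (Fin d) → ℝ)
    (hJmeas : Measurable J) (hJpos : ∀ x, 0 < J x) (hJL1 : Integrable J)
    (E : Set (EuclideanSpace ℝ (Fin d)))
    (hE : MeasurableSet E) (hEvol : volume E < ⊤) :
    Tendsto (fun ε : ℝ => JPer (fun x => ε ^ d * J (ε • x)) E)
      (𝓝[>] (0 : ℝ)) (𝓝 (ENNReal.ofReal (∫ x, J x) * volume E)) := by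
  have : Nontrivial (EuclideanSpace ℝ (Fin d)) :=
    finrank_pos_iff (R := ℝ).1 (by rw [finrank_euclideanSpace_fin]; exact hd)
  have hJ_lintegral : ∫⁻ z, ENNReal.ofReal (J z) = ENNReal.ofReal (∫ x, J x) :=
    (ofReal_integral_eq_lintegral_ofReal hJL1 (.of_forall fun x => (hJpos x).le)).symm
  have h_lim := tendsto_lintegral_mul_comp_inv_smul hJmeas.ennreal_ofReal
    (hJ_lintegral ▸ ofReal_ne_top) (measurable_measure_sdiff_vadd hE)
    (fun w => measure_mono sdiff_subset) hEvol.ne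
    (tendsto_measure_sdiff_vadd_cobounded hE hEvol.ne)
  rw [lintegral_mul_const _ hJmeas.ennreal_ofReal, hJ_lintegral] at h_lim
  refine h_lim.congr' ?_
  filter_upwards [self_mem_nhdsWithin] with ε (hε : 0 < ε)
  have h := lintegral_ofReal_rescale_mul volume J (fun w => volume (E \ (w +ᵥ E))) hε
  rw [finrank_euclideanSpace_fin] at h
  rw [JPer, setLIntegral_setLIntegral_compl_sub
    (fun w => ENNReal.ofReal (ε ^ d * J (ε • w))) (by fun_prop) hE, h]
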